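/- First moment of the ratio: for x ~ N(μ, Σ) with Σ positive definite and R symmetric positive definite with k-th column r, E[ (e_kᵀ R x)/(1 + xᵀ R x) ] = c ∫₀^∞ |S|^{−1/2} exp(−p₂) exp(bᵀS⁻¹b/4) (rᵀS⁻¹b)/2 dp₂, where S = (1/2)Σ⁻¹ + p₂R, b = Σ⁻¹μ, c = 2^{−n/2}|Σ|^{−1/2} exp(−μᵀΣ⁻¹μ/2). -/

import Mathlib

/-!
Write `1 / (1 + xᵀRx) = ∫₀^∞ exp (-(1 + xᵀRx) p) dp` and exchange the two integrals; Fubini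
applies because the integrand is dominated by `|rᵀx|` times the Gaussian density. For fixed
`p > 0` the Gaussian density times `exp (-p xᵀRx)` is, up to constants, `exp (-xᵀSx + bᵀx)`
with `S = Σ⁻¹/2 + pR` positive definite, and its first moment against `rᵀx` is computed by
completing the square: after translating by the mode `S⁻¹b/2` the odd part integrates to zero,
leaving `π^{n/2} |S|^{-1/2} exp (bᵀS⁻¹b/4) · rᵀS⁻¹b/2`.
-/

open Matrix MeasureTheory Real

/-- Density of the multivariate normal distribution `N(μ, Σ)` on `ℝⁿ`. -/
noncomputable def gaussDensity {n : ℕ} (μv : Fin n → ℝ)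
    (Sig : Matrix (Fin n) (Fin n) ℝ) (x : Fin n → ℝ) : ℝ :=
  (2 * Real.pi) ^ (-(n : ℝ) / 2) * Sig.det ^ (-(1 : ℝ) / 2) *
    Real.exp (-((x - μv) ⬝ᵥ (Sig⁻¹).mulVec (x - μv)) / 2)

open Set
open scoped MatrixOrder

section GaussianIntegral

variable {ι : Type*} [Fintype ι]

theorem integral_exp_neg_sq_add_mul (a : ℝ) :
    ∫ y : ℝ, exp (-y ^ 2 + a * y) = √π * exp (a ^ 2 / 4) := by
  have h : ∀ y : ℝ, -y ^ 2 + a * y = -(y - a / 2) ^ 2 + a ^ 2 / 4 := fun y => by ring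
  simp_rw [h, exp_add, integral_mul_const]
  rw [integral_sub_right_eq_self (fun y => exp (-y ^ 2)) (a / 2)]
  simpa using integral_gaussian 1

theorem integral_exp_neg_dotProduct_self_add (c : ι → ℝ) :
    ∫ x : ι → ℝ, exp (-(x ⬝ᵥ x) + c ⬝ᵥ x) = √π ^ Fintype.card ι * exp (c ⬝ᵥ c / 4) := by
  have hprod : ∀ x : ι → ℝ, exp (-(x ⬝ᵥ x) + c ⬝ᵥ x) = ∏ i, exp (-x i ^ 2 + c i * x i) := by
    intro x
    simp only [← exp_sum, dotProduct, Finset.sum_add_distrib, Finset.sum_neg_distrib, sq]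
  simp_rw [hprod]
  rw [integral_fintype_prod_volume_eq_prod (fun i y => exp (-y ^ 2 + c i * y))]
  simp_rw [integral_exp_neg_sq_add_mul]
  rw [Finset.prod_mul_distrib, Finset.prod_const, Finset.card_univ, ← exp_sum, dotProduct,
    Finset.sum_div]
  simp only [sq]

theorem map_mulVec_volume [DecidableEq ι] {M : Matrix ι ι ℝ} (hM : M.det ≠ 0) :
    Measure.map M.mulVec (volume : Measure (ι → ℝ)) = ENNReal.ofReal |M.det|⁻¹ • volume := by
  have h := Measure.map_linearMap_addHaar_pi_eq_smul_addHaar (f := toLin' M)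
    (by rwa [LinearMap.det_toLin']) (volume : Measure (ι → ℝ))
  rwa [LinearMap.det_toLin', abs_inv] at h

theorem integral_comp_mulVec [DecidableEq ι] {M : Matrix ι ι ℝ} (hM : M.det ≠ 0)
    {f : (ι → ℝ) → ℝ} (hf : AEStronglyMeasurable f volume) :
    ∫ x, f (M *ᵥ x) = |M.det|⁻¹ * ∫ y, f y := by
  have hmap := map_mulVec_volume hM
  rw [← integral_map (by fun_prop) (by rw [hmap]; exact hf.smul_measure _), hmap,
    integral_smul_measure, ENNReal.toReal_ofReal (by positivity), smul_eq_mul]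

theorem Matrix.IsSymm.dotProduct_mulVec_comm {R : Type*} [CommSemiring R] {S : Matrix ι ι R}
    (hS : S.IsSymm) (x y : ι → R) : x ⬝ᵥ S *ᵥ y = y ⬝ᵥ S *ᵥ x := by
  rw [dotProduct_mulVec, ← mulVec_transpose, hS.eq, dotProduct_comm]

theorem integral_dotProduct_mul_exp_neg_quadratic (S : Matrix ι ι ℝ) (r : ι → ℝ) :
    ∫ x, (r ⬝ᵥ x) * exp (-(x ⬝ᵥ S *ᵥ x)) = 0 := by
  have h := integral_neg_eq_self (fun x => (r ⬝ᵥ x) * exp (-(x ⬝ᵥ S *ᵥ x))) volume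
  simp only [mulVec_neg, dotProduct_neg, neg_dotProduct, neg_neg, neg_mul, integral_neg] at h
  linarith

variable [DecidableEq ι] {S : Matrix ι ι ℝ}

theorem integral_exp_neg_quadratic_add (hS : S.PosDef) (c : ι → ℝ) :
    ∫ x, exp (-(x ⬝ᵥ S *ᵥ x) + c ⬝ᵥ x) =
      √π ^ Fintype.card ι * (√S.det)⁻¹ * exp (c ⬝ᵥ S⁻¹ *ᵥ c / 4) := by
  set Q := CFC.sqrt S
  have hQQ : Q * Q = S := CFC.sqrt_mul_sqrt_self S hS.posSemidef.nonneg
  have hQ : Q.IsSymm := isHermitian_iff_isSymm.mp (CFC.sqrt_nonneg S).posSemidef.isHermitian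
  have hdet : Q.det * Q.det = S.det := by rw [← det_mul, hQQ]
  have hQ0 : Q.det ≠ 0 := fun h => hS.det_pos.ne' (by rw [← hdet, h, zero_mul])
  have habs : |Q.det| = √S.det := by rw [← sqrt_sq_eq_abs, sq, hdet]
  set d := Q⁻¹ *ᵥ c
  have hform : ∀ x, -(Q *ᵥ x ⬝ᵥ Q *ᵥ x) + d ⬝ᵥ Q *ᵥ x = -(x ⬝ᵥ S *ᵥ x) + c ⬝ᵥ x := by
    intro x
    rw [dotProduct_mulVec, ← mulVec_transpose, hQ.eq, mulVec_mulVec, hQQ, dotProduct_comm,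
      dotProduct_mulVec d, ← mulVec_transpose, hQ.eq, mulVec_mulVec,
      mul_nonsing_inv _ (Ne.isUnit hQ0), one_mulVec]
  have hdd : d ⬝ᵥ d = c ⬝ᵥ S⁻¹ *ᵥ c := by
    rw [dotProduct_mulVec, ← mulVec_transpose, transpose_nonsing_inv, hQ.eq, mulVec_mulVec,
      ← hQQ, Matrix.mul_inv_rev, dotProduct_comm]
  calc ∫ x, exp (-(x ⬝ᵥ S *ᵥ x) + c ⬝ᵥ x)
      = ∫ x, exp (-(Q *ᵥ x ⬝ᵥ Q *ᵥ x) + d ⬝ᵥ Q *ᵥ x) := by simp_rw [hform]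
    _ = |Q.det|⁻¹ * ∫ y, exp (-(y ⬝ᵥ y) + d ⬝ᵥ y) :=
        integral_comp_mulVec hQ0 (f := fun y => exp (-(y ⬝ᵥ y) + d ⬝ᵥ y))
          (Continuous.aestronglyMeasurable (by fun_prop))
    _ = _ := by rw [integral_exp_neg_dotProduct_self_add, habs, hdd]; ring

theorem integrable_exp_neg_quadratic_add (hS : S.PosDef) (c : ι → ℝ) :
    Integrable fun x => exp (-(x ⬝ᵥ S *ᵥ x) + c ⬝ᵥ x) :=
  .of_integral_ne_zero <| by
    rw [integral_exp_neg_quadratic_add hS]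
    have := hS.det_pos
    positivity

theorem integrable_dotProduct_mul_exp_neg_quadratic_add (hS : S.PosDef) (c r : ι → ℝ) :
    Integrable fun x => (r ⬝ᵥ x) * exp (-(x ⬝ᵥ S *ᵥ x) + c ⬝ᵥ x) := by
  refine ((integrable_exp_neg_quadratic_add hS (c + r)).add
    (integrable_exp_neg_quadratic_add hS (c - r))).mono' (by fun_prop) (ae_of_all _ fun x => ?_)
  have habs : |r ⬝ᵥ x| ≤ exp (r ⬝ᵥ x) + exp (-(r ⬝ᵥ x)) := by
    cases abs_cases (r ⬝ᵥ x) <;>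
      nlinarith [add_one_le_exp (r ⬝ᵥ x), add_one_le_exp (-(r ⬝ᵥ x)), exp_pos (r ⬝ᵥ x),
        exp_pos (-(r ⬝ᵥ x))]
  calc ‖(r ⬝ᵥ x) * exp (-(x ⬝ᵥ S *ᵥ x) + c ⬝ᵥ x)‖
      = |r ⬝ᵥ x| * exp (-(x ⬝ᵥ S *ᵥ x) + c ⬝ᵥ x) := by
        rw [norm_mul, norm_eq_abs, norm_of_nonneg (exp_pos _).le]
    _ ≤ (exp (r ⬝ᵥ x) + exp (-(r ⬝ᵥ x))) * exp (-(x ⬝ᵥ S *ᵥ x) + c ⬝ᵥ x) := by gcongr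
    _ = _ := by
        rw [Pi.add_apply, add_mul, ← exp_add, ← exp_add, add_dotProduct, sub_dotProduct]
        ring_nf

theorem integral_dotProduct_mul_exp_neg_quadratic_add (hS : S.PosDef) (c r : ι → ℝ) :
    ∫ x, (r ⬝ᵥ x) * exp (-(x ⬝ᵥ S *ᵥ x) + c ⬝ᵥ x) =
      √π ^ Fintype.card ι * (√S.det)⁻¹ * exp (c ⬝ᵥ S⁻¹ *ᵥ c / 4) * (r ⬝ᵥ S⁻¹ *ᵥ c / 2) := by
  have hSymm : S.IsSymm := isHermitian_iff_isSymm.mp hS.isHermitian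
  set m := (2 : ℝ)⁻¹ • S⁻¹ *ᵥ c
  have hSm : S *ᵥ m = (2 : ℝ)⁻¹ • c := by
    rw [mulVec_smul, mulVec_mulVec, mul_nonsing_inv _ (Ne.isUnit hS.det_pos.ne'), one_mulVec]
  have hsq : ∀ y, -((y + m) ⬝ᵥ S *ᵥ (y + m)) + c ⬝ᵥ (y + m) =
      -(y ⬝ᵥ S *ᵥ y) + c ⬝ᵥ S⁻¹ *ᵥ c / 4 := by
    intro y
    rw [mulVec_add, add_dotProduct, dotProduct_add, dotProduct_add,
      hSymm.dotProduct_mulVec_comm m y, hSm]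
    simp only [m, dotProduct_smul, smul_dotProduct, smul_eq_mul, dotProduct_add]
    rw [dotProduct_comm y c, dotProduct_comm (S⁻¹ *ᵥ c) c]
    ring
  have hodd := integrable_dotProduct_mul_exp_neg_quadratic_add hS 0 r
  have heven := integrable_exp_neg_quadratic_add hS 0
  have hG := integral_exp_neg_quadratic_add hS 0
  simp only [zero_dotProduct, add_zero, zero_div, exp_zero, mul_one] at hodd heven hG
  calc ∫ x, (r ⬝ᵥ x) * exp (-(x ⬝ᵥ S *ᵥ x) + c ⬝ᵥ x)
      = ∫ y, (r ⬝ᵥ (y + m)) * exp (-((y + m) ⬝ᵥ S *ᵥ (y + m)) + c ⬝ᵥ (y + m)) :=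
        (integral_add_right_eq_self (fun x => (r ⬝ᵥ x) * exp (-(x ⬝ᵥ S *ᵥ x) + c ⬝ᵥ x)) m).symm
    _ = ∫ y, ((r ⬝ᵥ y) * exp (-(y ⬝ᵥ S *ᵥ y)) + (r ⬝ᵥ m) * exp (-(y ⬝ᵥ S *ᵥ y))) *
          exp (c ⬝ᵥ S⁻¹ *ᵥ c / 4) := by
        simp_rw [hsq, exp_add, dotProduct_add, add_mul, mul_assoc]
    _ = _ := by
        rw [integral_mul_const, integral_add hodd (heven.const_mul _), integral_const_mul,
          integral_dotProduct_mul_exp_neg_quadratic, hG]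
        simp only [m, dotProduct_smul, smul_eq_mul]
        ring

end GaussianIntegral

theorem inv_eq_integral_exp_neg_mul_Ioi {a : ℝ} (ha : 0 < a) :
    a⁻¹ = ∫ p in Ioi (0 : ℝ), exp (-a * p) := by
  rw [integral_exp_mul_Ioi (neg_neg_of_pos ha), mul_zero, exp_zero, div_neg, neg_div, neg_neg,
    one_div]

theorem integral_div_one_add_eq_integral_Ioi_integral {α : Type*} [MeasurableSpace α]
    {μ : Measure α} [SFinite μ] {f q : α → ℝ} (hf : Integrable f μ) (hq : Measurable q)
    (hq0 : ∀ x, 0 ≤ q x) :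
    ∫ x, f x / (1 + q x) ∂μ = ∫ p in Ioi 0, ∫ x, exp (-(1 + q x) * p) * f x ∂μ := by
  have hpos : ∀ x, 0 < 1 + q x := fun x => by linarith [hq0 x]
  have hslice : ∀ x (y : ℝ), ∫ p in Ioi 0, exp (-(1 + q x) * p) * y = y / (1 + q x) := by
    intro x y
    rw [integral_mul_const, ← inv_eq_integral_exp_neg_mul_Ioi (hpos x), inv_mul_eq_div]
  have hF : Integrable (Function.uncurry fun x p => exp (-(1 + q x) * p) * f x)
      (μ.prod (volume.restrict (Ioi 0))) := by
    have hmeas : AEStronglyMeasurable (Function.uncurry fun x p => exp (-(1 + q x) * p) * f x)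
        (μ.prod (volume.restrict (Ioi 0))) :=
      (by fun_prop : Measurable fun z : α × ℝ => exp (-(1 + q z.1) * z.2)).aestronglyMeasurable.mul
        hf.1.comp_fst
    refine (integrable_prod_iff hmeas).2
      ⟨ae_of_all _ fun x => (integrableOn_exp_mul_Ioi (neg_neg_of_pos (hpos x)) 0).mul_const (f x),
        ?_⟩
    simp only [Function.uncurry_apply_pair, norm_mul, norm_of_nonneg (exp_pos _).le, hslice]
    refine hf.norm.mono'
      (hf.norm.1.aemeasurable.div (hq.const_add 1).aemeasurable).aestronglyMeasurable
      (ae_of_all _ fun x => ?_)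
    rw [norm_of_nonneg (div_nonneg (norm_nonneg _) (hpos x).le)]
    exact div_le_self (norm_nonneg _) (by linarith [hq0 x])
  rw [← integral_integral_swap hF]
  simp_rw [hslice]

theorem gaussDensity_eq_mul_exp {n : ℕ} (μv : Fin n → ℝ) {Sig : Matrix (Fin n) (Fin n) ℝ}
    (hSig : Sig.IsSymm) (x : Fin n → ℝ) :
    gaussDensity μv Sig x =
      (2 * π) ^ (-(n : ℝ) / 2) * Sig.det ^ (-(1 : ℝ) / 2) * exp (-(μv ⬝ᵥ Sig⁻¹ *ᵥ μv) / 2) *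
        exp (-(x ⬝ᵥ ((1 / 2 : ℝ) • Sig⁻¹) *ᵥ x) + Sig⁻¹ *ᵥ μv ⬝ᵥ x) := by
  rw [gaussDensity, mul_assoc _ (exp _), ← exp_add]
  congr 2
  rw [mulVec_sub, sub_dotProduct, dotProduct_sub, dotProduct_sub,
    hSig.inv.dotProduct_mulVec_comm μv x, smul_mulVec, dotProduct_smul, smul_eq_mul,
    dotProduct_comm (Sig⁻¹ *ᵥ μv)]
  ring

theorem two_pi_rpow_mul_sqrt_pi_pow (n : ℕ) :
    (2 * π) ^ (-(n : ℝ) / 2) * √π ^ n = 2 ^ (-(n : ℝ) / 2) := by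
  rw [mul_rpow zero_le_two pi_pos.le, sqrt_eq_rpow, ← rpow_natCast, ← rpow_mul pi_pos.le, mul_assoc,
    ← rpow_add pi_pos, show -(n : ℝ) / 2 + 1 / 2 * n = 0 by ring, rpow_zero, mul_one]

/-- First moment of the ratio for `x ~ N(μ, Σ)`:
`E[(e_kᵀRx)/(1 + xᵀRx)]
  = c ∫₀^∞ |S|^{−1/2} e^{−p₂} e^{bᵀS⁻¹b/4} (rᵀS⁻¹b)/2 dp₂`,
with `S = (1/2)Σ⁻¹ + p₂R`, `b = Σ⁻¹μ`, `c = 2^{−n/2}|Σ|^{−1/2}e^{−μᵀΣ⁻¹μ/2}`. -/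
theorem first_moment_ratio {n : ℕ} (μv : Fin n → ℝ)
    (Sig R : Matrix (Fin n) (Fin n) ℝ) (hSig : Sig.PosDef) (hR : R.PosDef)
    (hRsymm : Rᵀ = R) (k : Fin n)
    (b : Fin n → ℝ) (hb : b = (Sig⁻¹).mulVec μv)
    (r : Fin n → ℝ) (hr : r = fun i => R i k)
    (c : ℝ) (hc : c = (2 : ℝ) ^ (-(n : ℝ) / 2) * Sig.det ^ (-(1 : ℝ) / 2) *
      Real.exp (-(μv ⬝ᵥ (Sig⁻¹).mulVec μv) / 2)) :
    ∫ x : Fin n → ℝ,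
        (Pi.single k 1 ⬝ᵥ R.mulVec x) / (1 + x ⬝ᵥ R.mulVec x) *
          gaussDensity μv Sig x =
      c * ∫ p₂ in Set.Ioi (0 : ℝ),
        ((1 / 2 : ℝ) • Sig⁻¹ + p₂ • R).det ^ (-(1 : ℝ) / 2) * Real.exp (-p₂) *
          Real.exp ((b ⬝ᵥ (((1 / 2 : ℝ) • Sig⁻¹ + p₂ • R)⁻¹).mulVec b) / 4) *
          ((r ⬝ᵥ (((1 / 2 : ℝ) • Sig⁻¹ + p₂ • R)⁻¹).mulVec b) / 2) := by
  set A : Matrix (Fin n) (Fin n) ℝ := (1 / 2 : ℝ) • Sig⁻¹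
  set C₀ := (2 * π) ^ (-(n : ℝ) / 2) * Sig.det ^ (-(1 : ℝ) / 2) *
    exp (-(μv ⬝ᵥ Sig⁻¹ *ᵥ μv) / 2)
  have hA : A.PosDef := hSig.inv.smul (by norm_num)
  have hS : ∀ p : ℝ, 0 < p → (A + p • R).PosDef := fun p hp =>
    hA.add_posSemidef (hR.posSemidef.smul hp.le)
  have hnum : ∀ x, Pi.single k 1 ⬝ᵥ R *ᵥ x = r ⬝ᵥ x := fun x => by
    have hrow : r = R k := by
      rw [hr]
      ext i
      exact congrFun (congrFun hRsymm k) i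
    rw [single_one_dotProduct, hrow]
    rfl
  have hkernel : ∀ (p : ℝ) x, exp (-(1 + x ⬝ᵥ R *ᵥ x) * p) *
      ((r ⬝ᵥ x) * exp (-(x ⬝ᵥ A *ᵥ x) + b ⬝ᵥ x)) =
        exp (-p) * ((r ⬝ᵥ x) * exp (-(x ⬝ᵥ (A + p • R) *ᵥ x) + b ⬝ᵥ x)) := fun p x => by
    rw [add_mulVec, dotProduct_add, smul_mulVec p R, dotProduct_smul, smul_eq_mul, mul_left_comm,
      ← exp_add, mul_left_comm (exp (-p)), ← exp_add]
    ring_nf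
  calc _ = C₀ * ∫ x, (r ⬝ᵥ x) * exp (-(x ⬝ᵥ A *ᵥ x) + b ⬝ᵥ x) / (1 + x ⬝ᵥ R *ᵥ x) := by
        rw [← integral_const_mul]
        congr 1 with x
        rw [gaussDensity_eq_mul_exp μv (isHermitian_iff_isSymm.mp hSig.isHermitian), hnum, hb]
        ring
    _ = C₀ * ∫ p in Ioi 0, ∫ x, exp (-(1 + x ⬝ᵥ R *ᵥ x) * p) *
          ((r ⬝ᵥ x) * exp (-(x ⬝ᵥ A *ᵥ x) + b ⬝ᵥ x)) := by
        rw [integral_div_one_add_eq_integral_Ioi_integral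
          (integrable_dotProduct_mul_exp_neg_quadratic_add hA b r) (by fun_prop)
          fun x => by simpa using hR.posSemidef.dotProduct_mulVec_nonneg x]
    _ = C₀ * ∫ p in Ioi 0, exp (-p) * (√π ^ n * (√(A + p • R).det)⁻¹ *
          exp (b ⬝ᵥ (A + p • R)⁻¹ *ᵥ b / 4) * (r ⬝ᵥ (A + p • R)⁻¹ *ᵥ b / 2)) := by
        congr 1
        refine setIntegral_congr_fun measurableSet_Ioi fun p hp => ?_
        simp_rw [hkernel]
        rw [integral_const_mul, integral_dotProduct_mul_exp_neg_quadratic_add (hS p hp),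
          Fintype.card_fin]
    _ = _ := by
        rw [← integral_const_mul, ← integral_const_mul]
        refine setIntegral_congr_fun measurableSet_Ioi fun p hp => ?_
        rw [neg_div, rpow_neg (hS p hp).det_pos.le, ← sqrt_eq_rpow, hc,
          ← two_pi_rpow_mul_sqrt_pi_pow]
        ring
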